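/- Let U ⊆ ℝ^m be open and, for each l,i,j ∈ {1,…,m}, let Γ^l_{ij} : U → ℝ be locally Lipschitz functions with Γ^l_{ij} = Γ^l_{ji}. Assume that for every p ∈ U with p^m = 0 and every v ∈ ℝ^m with v^m = 0 one has Σ_{i,j} Γ^m_{ij}(p) v^i v^j ≥ 0. Let γ : [0,b] → U be a C² curve satisfying the geodesic equation γ̈^l(s) = −Σ_{i,j} Γ^l_{ij}(γ(s)) γ̇^i(s) γ̇^j(s), with γ^m(s) ≥ 0 for all s ∈ [0,b] and with (γ^1(s),…,γ^{m−1}(s),0) ∈ U for all s ∈ [0,b]. Then there exists a constant c > 0 (depending on γ) such that the function ρ(s) = γ^m(s) satisfies ρ''(s) ≤ c (ρ(s) + |ρ'(s)|) for all s ∈ [0,b]. -/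
import Mathlib

open Set Metric NNReal

lemma lip_on_compact {α : Type*} [MetricSpace α] {U : Set α} (hU : IsOpen U) {f : α → ℝ}
    (hf : LocallyLipschitzOn U f) {K : Set α} (hK : IsCompact K) (hKU : K ⊆ U) :
    ∃ C : ℝ, 0 ≤ C ∧ ∀ x ∈ K, ∀ y ∈ K, |f x - f y| ≤ C * dist x y := by

  have h : ∀ x : α, ∃ ε : ℝ, ∃ L : ℝ≥0, 0 < ε ∧ (x ∈ K →
      ∀ y ∈ ball x ε, ∀ z ∈ ball x ε, |f y - f z| ≤ (L : ℝ) * dist y z) := by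
    intro x
    by_cases hx : x ∈ K
    · obtain ⟨L, t, ht, hlip⟩ := hf (hKU hx)
      rw [(hU.nhdsWithin_eq (hKU hx))] at ht
      obtain ⟨ε, hε, hball⟩ := Metric.mem_nhds_iff.1 ht
      refine ⟨ε, L, hε, fun _ y hy z hz => ?_⟩
      have := hlip.dist_le_mul y (hball hy) z (hball hz)
      rwa [Real.dist_eq] at this
    · exact ⟨1, 0, one_pos, fun h => absurd h hx⟩
  choose ε L hε hL using h
  by_cases hKe : K = ∅
  · exact ⟨0, le_refl 0, by simp [hKe]⟩
  obtain ⟨t, htK, hcov⟩ := hK.elim_nhds_subcover (fun x => ball x (ε x / 2))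
    (fun x _ => ball_mem_nhds x (half_pos (hε x)))
  have htne : t.Nonempty := by
    rcases Set.nonempty_iff_ne_empty.2 hKe with ⟨x, hx⟩
    rcases Set.mem_iUnion₂.1 (hcov hx) with ⟨i, hi, _⟩
    exact ⟨i, hi⟩
  have hfc : ContinuousOn f K := hf.continuousOn.mono hKU
  obtain ⟨Mb, hMb⟩ := hK.exists_bound_of_continuousOn hfc
  set δ : ℝ := t.inf' htne (fun x => ε x / 2) with hδdef
  have hδ : 0 < δ := by
    rw [hδdef, Finset.lt_inf'_iff]
    exact fun x _ => half_pos (hε x)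
  set Lm : ℝ := t.sup' htne (fun x => (L x : ℝ)) with hLm
  set C : ℝ := max Lm (2 * max Mb 0 / δ) with hC
  have hC0 : 0 ≤ C := by
    refine le_trans ?_ (le_max_right _ _)
    positivity
  refine ⟨C, hC0, fun x hx y hy => ?_⟩
  rcases Set.mem_iUnion₂.1 (hcov hx) with ⟨i, hit, hxi⟩
  by_cases hd : dist x y < δ
  · have h2 : δ ≤ ε i / 2 := Finset.inf'_le _ hit
    have h1 : dist x i < ε i / 2 := mem_ball.1 hxi
    have hyi : y ∈ ball i (ε i) := by
      rw [mem_ball]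
      calc dist y i ≤ dist y x + dist x i := dist_triangle _ _ _
        _ < δ + ε i / 2 := by rw [dist_comm y x]; exact add_lt_add (hd) h1
        _ ≤ ε i := by linarith
    have hxi' : x ∈ ball i (ε i) := by
      rw [mem_ball]; linarith [mem_ball.1 hxi]
    have hest := hL i (htK i hit) x hxi' y hyi
    have hLi : (L i : ℝ) ≤ Lm := Finset.le_sup' (fun x => (L x : ℝ)) hit
    calc |f x - f y| ≤ (L i : ℝ) * dist x y := hest
      _ ≤ Lm * dist x y := mul_le_mul_of_nonneg_right hLi dist_nonneg
      _ ≤ C * dist x y := mul_le_mul_of_nonneg_right (le_max_left _ _) dist_nonneg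
  · push_neg at hd
    have hb1 : ‖f x‖ ≤ Mb := hMb x hx
    have hb2 : ‖f y‖ ≤ Mb := hMb y hy
    rw [Real.norm_eq_abs] at hb1 hb2
    have : |f x - f y| ≤ 2 * max Mb 0 := by
      calc |f x - f y| ≤ |f x| + |f y| := abs_sub _ _
        _ ≤ 2 * max Mb 0 := by
            have := le_max_left Mb 0
            nlinarith [abs_nonneg (f x), abs_nonneg (f y)]
    calc |f x - f y| ≤ 2 * max Mb 0 := this
      _ = (2 * max Mb 0 / δ) * δ := by field_simp
      _ ≤ (2 * max Mb 0 / δ) * dist x y := by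
          apply mul_le_mul_of_nonneg_left hd; positivity
      _ ≤ C * dist x y := by
          apply mul_le_mul_of_nonneg_right (le_max_right _ _) dist_nonneg


/-- **Intermediate estimate in the proof of Lemma 3.2**: under the
infinitesimal-convexity condition on the locally Lipschitz Christoffel symbols,
the last coordinate `ρ = γ^m` of a geodesic `γ` that remains on the side
`{x^m ≥ 0}` (and whose projection to `{x^m = 0}` stays in `U`) satisfies the
differential inequality `ρ'' ≤ c (ρ + |ρ'|)` on `[0,b]` for some constant `c > 0`. -/
theorem stmt_2 (m : ℕ) (hm : 0 < m) (U : Set (Fin m → ℝ)) (hU : IsOpen U)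
    (Γ : Fin m → Fin m → Fin m → (Fin m → ℝ) → ℝ)
    (hΓlip : ∀ l i j, LocallyLipschitzOn U (Γ l i j))
    (hΓsym : ∀ l i j p, Γ l i j p = Γ l j i p)
    (hconv : ∀ p ∈ U, p ⟨m - 1, by omega⟩ = 0 →
      ∀ v : Fin m → ℝ, v ⟨m - 1, by omega⟩ = 0 →
        0 ≤ ∑ i, ∑ j, Γ ⟨m - 1, by omega⟩ i j p * v i * v j)
    (b : ℝ) (hb : 0 < b) (γ γ' γ'' : ℝ → Fin m → ℝ)
    (hγU : ∀ s ∈ Icc (0 : ℝ) b, γ s ∈ U)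
    (hγ' : ∀ s ∈ Icc (0 : ℝ) b, HasDerivWithinAt γ (γ' s) (Icc (0 : ℝ) b) s)
    (hγ'' : ∀ s ∈ Icc (0 : ℝ) b, HasDerivWithinAt γ' (γ'' s) (Icc (0 : ℝ) b) s)
    (hγ''cont : ContinuousOn γ'' (Icc (0 : ℝ) b))
    (hgeo : ∀ s ∈ Icc (0 : ℝ) b, ∀ l,
      γ'' s l = -∑ i, ∑ j, Γ l i j (γ s) * γ' s i * γ' s j)
    (hside : ∀ s ∈ Icc (0 : ℝ) b, 0 ≤ γ s ⟨m - 1, by omega⟩)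
    (hproj : ∀ s ∈ Icc (0 : ℝ) b,
      Function.update (γ s) ⟨m - 1, by omega⟩ 0 ∈ U) :
    ∃ c : ℝ, 0 < c ∧ ∀ s ∈ Icc (0 : ℝ) b,
      γ'' s ⟨m - 1, by omega⟩ ≤
        c * (γ s ⟨m - 1, by omega⟩ + |γ' s ⟨m - 1, by omega⟩|) := by
  have hem : m - 1 < m := by omega
  set e : Fin m := ⟨m - 1, hem⟩ with he
  set I : Set ℝ := Icc (0 : ℝ) b with hI
  have hIc : IsCompact I := isCompact_Icc
  have hγc : ContinuousOn γ I := fun s hs => (hγ' s hs).continuousWithinAt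
  have hγ'c : ContinuousOn γ' I := fun s hs => (hγ'' s hs).continuousWithinAt
  set γH : ℝ → Fin m → ℝ := fun s => Function.update (γ s) e 0 with hγHdef
  have hγHc : ContinuousOn γH I := by
    apply continuousOn_pi.2
    intro i
    have heq : (fun s => γH s i) = fun s => if i = e then 0 else γ s i := by
      funext s; simp [γH, Function.update_apply]
    rw [heq]
    split_ifs
    · exact continuousOn_const
    · exact (continuous_apply i).comp_continuousOn hγc
  set K : Set (Fin m → ℝ) := γ '' I ∪ γH '' I with hKdef
  have hKc : IsCompact K := (hIc.image_of_continuousOn hγc).union (hIc.image_of_continuousOn hγHc)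
  have hKU : K ⊆ U := by
    rintro x (⟨s, hs, rfl⟩ | ⟨s, hs, rfl⟩)
    · exact hγU s hs
    · exact hproj s hs
  -- uniform Lipschitz constants on K
  choose Cf hCf0 hCf using fun i j => lip_on_compact hU (hΓlip e i j) hKc hKU
  set Ct : ℝ := ∑ i, ∑ j, Cf i j with hCtdef
  have hCt0 : 0 ≤ Ct := Finset.sum_nonneg fun i _ => Finset.sum_nonneg fun j _ => hCf0 i j
  have hCfle : ∀ i j, Cf i j ≤ Ct := by
    intro i j
    calc Cf i j ≤ ∑ j, Cf i j :=
          Finset.single_le_sum (fun k _ => hCf0 i k) (Finset.mem_univ j)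
      _ ≤ Ct := Finset.single_le_sum
          (fun k _ => Finset.sum_nonneg fun l _ => hCf0 k l) (Finset.mem_univ i)
  -- bound on the derivative
  obtain ⟨M0, hM0⟩ := hIc.exists_bound_of_continuousOn hγ'c
  set M : ℝ := max M0 1 with hMdef
  have hM1 : (1 : ℝ) ≤ M := le_max_right _ _
  have hM0' : (0 : ℝ) ≤ M := le_trans zero_le_one hM1
  have hM : ∀ s ∈ I, ∀ i, |γ' s i| ≤ M := by
    intro s hs i
    calc |γ' s i| = ‖γ' s i‖ := (Real.norm_eq_abs _).symm
      _ ≤ ‖γ' s‖ := norm_le_pi_norm (γ' s) i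
      _ ≤ M0 := hM0 s hs
      _ ≤ M := le_max_left _ _
  -- bound on Γ along γ
  have hΓγc : ∀ i j, ContinuousOn (fun s => Γ e i j (γ s)) I := fun i j =>
    (hΓlip e i j).continuousOn.comp hγc fun s hs => hγU s hs
  choose Gf hGf using fun i j => hIc.exists_bound_of_continuousOn (hΓγc i j)
  set G : ℝ := ∑ i, ∑ j, |Gf i j| with hGdef
  have hG0 : 0 ≤ G := Finset.sum_nonneg fun i _ => Finset.sum_nonneg fun j _ => abs_nonneg _
  have hG : ∀ i j, ∀ s ∈ I, |Γ e i j (γ s)| ≤ G := by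
    intro i j s hs
    have h1 : |Γ e i j (γ s)| ≤ |Gf i j| := by
      have := hGf i j s hs
      rw [Real.norm_eq_abs] at this
      exact this.trans (le_abs_self _)
    calc |Γ e i j (γ s)| ≤ |Gf i j| := h1
      _ ≤ ∑ j, |Gf i j| := Finset.single_le_sum (f := fun k => |Gf i k|) (fun k _ => abs_nonneg _) (Finset.mem_univ j)
      _ ≤ G := Finset.single_le_sum (f := fun k => ∑ l, |Gf k l|)
          (fun k _ => Finset.sum_nonneg fun l _ => abs_nonneg _) (Finset.mem_univ i)
  -- the constant
  set c : ℝ := (m : ℝ) * m * Ct * (M * M) + (m : ℝ) * m * G * M + 1 with hcdef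
  have hm0 : (0 : ℝ) ≤ m := Nat.cast_nonneg m
  have hc1 : (m : ℝ) * m * Ct * (M * M) ≤ c - 1 ∧ (m : ℝ) * m * G * M ≤ c - 1 := by
    constructor <;> nlinarith [mul_nonneg (mul_nonneg (mul_nonneg hm0 hm0) hCt0) (mul_nonneg hM0' hM0'), mul_nonneg (mul_nonneg (mul_nonneg hm0 hm0) hG0) hM0']
  have hc : 0 < c := by nlinarith [hc1.1, mul_nonneg (mul_nonneg (mul_nonneg hm0 hm0) hCt0) (mul_nonneg hM0' hM0')]
  refine ⟨c, hc, fun s hs => ?_⟩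
  -- pointwise estimate
  set q : Fin m → ℝ := γ s with hq
  set p : Fin m → ℝ := γH s with hp
  set v : Fin m → ℝ := Function.update (γ' s) e 0 with hv
  have hρ0 : 0 ≤ q e := hside s hs
  have hpe : p e = 0 := Function.update_self e 0 (γ s)
  have hve : v e = 0 := Function.update_self e 0 (γ' s)
  have hT : 0 ≤ ∑ i, ∑ j, Γ e i j p * v i * v j := hconv p (hproj s hs) hpe v hve
  have hgeoe : γ'' s e = -∑ i, ∑ j, Γ e i j q * γ' s i * γ' s j := hgeo s hs e
  -- distance between p and q
  have hdist : dist p q ≤ q e := by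
    rw [dist_pi_le_iff hρ0]
    intro k
    by_cases hk : k = e
    · subst hk
      rw [hpe, Real.dist_eq, abs_sub_comm, sub_zero, abs_of_nonneg hρ0]
    · have : p k = q k := Function.update_of_ne hk 0 (γ s)
      rw [this, dist_self]
      exact hρ0
  have hvb : ∀ k, |v k| ≤ M := by
    intro k
    by_cases hk : k = e
    · subst hk; rw [hve, abs_zero]; exact hM0'
    · rw [hv, Function.update_of_ne hk]; exact hM s hs k
  -- per-term bound
  set B : ℝ := Ct * (M * M) * q e + G * (M * |γ' s e|) with hB
  have key : ∀ i j, Γ e i j p * v i * v j - Γ e i j q * γ' s i * γ' s j ≤ B := by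
    intro i j
    have t1 : |Γ e i j p - Γ e i j q| ≤ Cf i j * q e := by
      have h1 := hCf i j p (Or.inr ⟨s, hs, rfl⟩) q (Or.inl ⟨s, hs, rfl⟩)
      calc |Γ e i j p - Γ e i j q| ≤ Cf i j * dist p q := h1
        _ ≤ Cf i j * q e := mul_le_mul_of_nonneg_left hdist (hCf0 i j)
    have t2 : |Γ e i j q| ≤ G := hG i j s hs
    have t3 : |v i| ≤ M := hvb i
    have t3' : |v j| ≤ M := hvb j
    have t4 : |v i * v j - γ' s i * γ' s j| ≤ M * |γ' s e| := by
      by_cases hi : i = e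
      · subst hi
        rw [hve, zero_mul, zero_sub, abs_neg, abs_mul]
        calc |γ' s e| * |γ' s j| ≤ |γ' s e| * M :=
              mul_le_mul_of_nonneg_left (hM s hs j) (abs_nonneg _)
          _ = M * |γ' s e| := mul_comm _ _
      · by_cases hj : j = e
        · subst hj
          rw [hv, Function.update_of_ne hi, Function.update_self, mul_zero, zero_sub, abs_neg, abs_mul]
          exact mul_le_mul_of_nonneg_right (hM s hs i) (abs_nonneg _)
        · rw [hv, Function.update_of_ne hi, Function.update_of_ne hj, sub_self, abs_zero]
          positivity
    have hCfq : Cf i j * q e ≤ Ct * q e := mul_le_mul_of_nonneg_right (hCfle i j) hρ0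
    have expand : Γ e i j p * v i * v j - Γ e i j q * γ' s i * γ' s j =
        (Γ e i j p - Γ e i j q) * (v i * v j) + Γ e i j q * (v i * v j - γ' s i * γ' s j) := by
      ring
    rw [expand]
    have e1 : (Γ e i j p - Γ e i j q) * (v i * v j) ≤ Ct * (M * M) * q e := by
      calc (Γ e i j p - Γ e i j q) * (v i * v j)
          ≤ |(Γ e i j p - Γ e i j q) * (v i * v j)| := le_abs_self _
        _ = |Γ e i j p - Γ e i j q| * (|v i| * |v j|) := by rw [abs_mul, abs_mul]
        _ ≤ (Cf i j * q e) * (M * M) := by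
            apply mul_le_mul t1 (mul_le_mul t3 t3' (abs_nonneg _) hM0')
              (mul_nonneg (abs_nonneg _) (abs_nonneg _)) (mul_nonneg (hCf0 i j) hρ0)
        _ ≤ (Ct * q e) * (M * M) :=
            mul_le_mul_of_nonneg_right hCfq (mul_nonneg hM0' hM0')
        _ = Ct * (M * M) * q e := by ring
    have e2 : Γ e i j q * (v i * v j - γ' s i * γ' s j) ≤ G * (M * |γ' s e|) := by
      calc Γ e i j q * (v i * v j - γ' s i * γ' s j)
          ≤ |Γ e i j q * (v i * v j - γ' s i * γ' s j)| := le_abs_self _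
        _ = |Γ e i j q| * |v i * v j - γ' s i * γ' s j| := abs_mul _ _
        _ ≤ G * (M * |γ' s e|) :=
            mul_le_mul t2 t4 (abs_nonneg _) hG0
    linarith [e1, e2]
  -- sum the bound
  have hsum : ∑ i, ∑ j, Γ e i j p * v i * v j - ∑ i, ∑ j, Γ e i j q * γ' s i * γ' s j
      ≤ (m : ℝ) * m * B := by
    rw [← Finset.sum_sub_distrib]
    have : ∀ i ∈ Finset.univ, (∑ j, Γ e i j p * v i * v j) - (∑ j, Γ e i j q * γ' s i * γ' s j)
        ≤ (m : ℝ) * B := by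
      intro i _
      rw [← Finset.sum_sub_distrib]
      calc ∑ j, (Γ e i j p * v i * v j - Γ e i j q * γ' s i * γ' s j)
          ≤ ∑ _j : Fin m, B := Finset.sum_le_sum fun j _ => key i j
        _ = (m : ℝ) * B := by
            rw [Finset.sum_const, Finset.card_univ, Fintype.card_fin, nsmul_eq_mul]
    calc ∑ i, ((∑ j, Γ e i j p * v i * v j) - (∑ j, Γ e i j q * γ' s i * γ' s j))
        ≤ ∑ _i : Fin m, (m : ℝ) * B := Finset.sum_le_sum this
      _ = (m : ℝ) * ((m : ℝ) * B) := by
          rw [Finset.sum_const, Finset.card_univ, Fintype.card_fin, nsmul_eq_mul]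
      _ = (m : ℝ) * m * B := by ring
  have hBc : (m : ℝ) * m * B ≤ c * (q e + |γ' s e|) := by
    have h1 := hc1.1
    have h2 := hc1.2
    have habs : 0 ≤ |γ' s e| := abs_nonneg _
    have expand : (m : ℝ) * m * B =
        ((m : ℝ) * m * Ct * (M * M)) * q e + ((m : ℝ) * m * G * M) * |γ' s e| := by
      rw [hB]; ring
    rw [expand]
    have hcpos : 0 ≤ c := le_of_lt hc
    calc ((m : ℝ) * m * Ct * (M * M)) * q e + ((m : ℝ) * m * G * M) * |γ' s e|
        ≤ c * q e + c * |γ' s e| := by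
          apply add_le_add
          · exact mul_le_mul_of_nonneg_right (by linarith) hρ0
          · exact mul_le_mul_of_nonneg_right (by linarith) habs
      _ = c * (q e + |γ' s e|) := by ring
  show γ'' s e ≤ c * (q e + |γ' s e|)
  calc γ'' s e = -∑ i, ∑ j, Γ e i j q * γ' s i * γ' s j := hgeoe
    _ ≤ ∑ i, ∑ j, Γ e i j p * v i * v j - ∑ i, ∑ j, Γ e i j q * γ' s i * γ' s j := by
        linarith [hT]
    _ ≤ (m : ℝ) * m * B := hsum
    _ ≤ c * (q e + |γ' s e|) := hBc
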